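/- Let $A$ be a strictly upper-triangular $n \times n$ integer matrix, $\lambda \in \mathbb{R}^n$, and for $I \subseteq \{1,\dots,n\}$ nonempty let $p_I \in \mathbb{R}^n$ be the unique point with $\langle p_I, e_j\rangle = 0$ for $j \notin I$ and $\langle p_I, e_j + \sum_i A^i_j e_i\rangle = \lambda_j$ for $j \in I$. Then for every $j \in I$, $\langle p_I, e_j\rangle = \Xi([j] \cap I)$, where $\Xi(J) = \sum (-1)^m \lambda_{i_0} A^{i_0}_{i_1} \cdots A^{i_{m-1}}_{i_m}$ summed over chains $i_0 < \cdots < i_m = \max(J)$ contained in $J$, and $[j] = \{1,\dots,j\}$. -/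

import Mathlib

/-!
Both sides satisfy the same triangular recursion in `j`. Since `A` is strictly upper-triangular
and `p` vanishes off `I`, the equation of `p_I` at `j` reads
`p_j = λ_j - ∑_{i ∈ I, i < j} A^i_j p_i`. On the other side, a chain in `[j] ∩ I` ending at
`j` is either `{j}` or a chain in `[i] ∩ I` ending at some `i < j` with `j` appended, which
multiplies its value by `-A^i_j`; hence `Ξ([j] ∩ I) = λ_j - ∑_{i ∈ I, i < j} A^i_j Ξ([i] ∩ I)`.
Strong induction on `j` concludes.
-/

open Finset

/-- `Λ(J)`: for `J = {i₀ < ⋯ < i_m}`, the value `(-1)^m λ_{i₀} A^{i₀}_{i₁} ⋯ A^{i_{m-1}}_{i_m}`. -/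
noncomputable def chainVal {n : ℕ} (A : Fin n → Fin n → ℤ) (lam : Fin n → ℝ)
    (J : Finset (Fin n)) : ℝ :=
  match J.sort (· ≤ ·) with
  | [] => 0
  | a :: rest =>
      (-1 : ℝ) ^ rest.length * lam a *
        (((a :: rest).zip rest).map (fun p => (A p.1 p.2 : ℝ))).prod

/-- `Ξ(I)`: sum of `Λ(J)` over nonempty `J ⊆ I` with `max J = max I`. -/
noncomputable def XiVal {n : ℕ} (A : Fin n → Fin n → ℤ) (lam : Fin n → ℝ)
    (I : Finset (Fin n)) : ℝ :=
  ∑ J ∈ I.powerset.filter (fun J => J.max = I.max), chainVal A lam J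

lemma Finset.sort_insert_of_forall_lt {α : Type*} [LinearOrder α] {s : Finset α} {a : α}
    (h : ∀ x ∈ s, x < a) : (insert a s).sort (· ≤ ·) = s.sort (· ≤ ·) ++ [a] := by
  have hl : (s.sort (· ≤ ·) ++ [a]).toFinset = insert a s := by ext; simp
  have hnd : (s.sort (· ≤ ·) ++ [a]).Nodup :=
    List.nodup_append.2 ⟨s.sort_nodup _, List.nodup_singleton a,
      by simpa using fun x hx => (h x hx).ne⟩
  rw [← hl, List.toFinset_sort _ hnd, List.pairwise_append]
  simpa using fun x hx => (h x hx).le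

lemma Finset.max_insert_of_forall_le {α : Type*} [LinearOrder α] {s : Finset α} {a : α}
    (h : ∀ x ∈ s, x ≤ a) : (insert a s).max = a := by
  rw [max_insert, max_eq_left (Finset.max_le fun x hx => WithBot.coe_le_coe.2 (h x hx))]

lemma Finset.filter_le_eq_insert_filter_lt {α : Type*} [LinearOrder α] {s : Finset α} {a : α}
    (ha : a ∈ s) : s.filter (· ≤ a) = insert a (s.filter (· < a)) := by
  ext x
  grind

lemma List.zip_cons_append_singleton {α : Type*} (a j : α) (l : List α) :
    (a :: (l ++ [j])).zip (l ++ [j])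
      = (a :: l).zip l ++ [((a :: l).getLast (cons_ne_nil a l), j)] := by
  induction l generalizing a with
  | nil => rfl
  | cons b l ih => rw [cons_append, zip_cons_cons, ih b]; rfl

section

variable {n : ℕ} (A : Fin n → Fin n → ℤ) (lam : Fin n → ℝ)

lemma chainVal_insert_insert {J : Finset (Fin n)} {a j : Fin n} (hJ : ∀ x ∈ J, x < a)
    (haj : a < j) :
    chainVal A lam (insert j (insert a J)) = -(A a j : ℝ) * chainVal A lam (insert a J) := by
  have hj : ∀ x ∈ insert a J, x < j := by
    simpa using ⟨haj, fun x hx => (hJ x hx).trans haj⟩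
  unfold chainVal
  rw [sort_insert_of_forall_lt hj, sort_insert_of_forall_lt hJ]
  generalize J.sort (· ≤ ·) = l
  cases l with
  | nil =>
    simp only [List.nil_append, List.cons_append, List.length_cons, List.length_nil,
      List.zip_cons_cons, List.zip_nil_right, List.map_cons, List.map_nil, List.prod_cons,
      List.prod_nil]
    ring
  | cons b l =>
    simp only [List.cons_append]
    rw [List.zip_cons_append_singleton]
    simp only [List.length_append, List.length_singleton, List.map_append, List.map_cons,
      List.map_nil, List.prod_append, List.prod_cons, List.prod_nil,
      List.getLast_cons (List.concat_ne_nil a l), List.getLast_append_singleton]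
    ring

lemma XiVal_insert_of_forall_lt {S : Finset (Fin n)} {j : Fin n} (h : ∀ x ∈ S, x < j) :
    XiVal A lam (insert j S) = ∑ J ∈ S.powerset, chainVal A lam (insert j J) := by
  have hmax : ∀ J ⊆ S, (insert j J).max = j := fun J hJ =>
    max_insert_of_forall_le fun x hx => (h x (hJ hx)).le
  have hS : ∀ J ⊆ S, J.max ≠ j := fun J hJ hJj => (h j (hJ (mem_of_max hJj))).false
  rw [XiVal, sum_filter, sum_powerset_insert (fun hj => (h j hj).false),
    hmax S subset_rfl, sum_eq_zero fun J hJ => if_neg (hS J (mem_powerset.1 hJ)),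
    zero_add]
  exact sum_congr rfl fun J hJ => if_pos (hmax J (mem_powerset.1 hJ))

lemma sum_powerset_chainVal_insert {S : Finset (Fin n)} {j : Fin n} (h : ∀ x ∈ S, x < j) :
    ∑ J ∈ S.powerset, chainVal A lam (insert j J)
      = lam j - ∑ i ∈ S, (A i j : ℝ) * XiVal A lam (S.filter (· ≤ i)) := by
  induction S using induction_on_max with
  | empty => simp [chainVal]
  | insert a S hS ih =>
    have haj : a < j := h a (mem_insert_self a S)
    have ha : a ∉ S := fun ha => (hS a ha).false
    have hfilter_self : (insert a S).filter (· ≤ a) = insert a S :=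
      filter_true_of_mem fun x hx => by
        rcases mem_insert.1 hx with rfl | hx
        exacts [le_rfl, (hS x hx).le]
    have hsum_filter : ∑ i ∈ S, (A i j : ℝ) * XiVal A lam ((insert a S).filter (· ≤ i))
        = ∑ i ∈ S, (A i j : ℝ) * XiVal A lam (S.filter (· ≤ i)) :=
      sum_congr rfl fun i hi => by
        rw [filter_insert, if_neg (not_le.2 (hS i hi))]
    have hchain : ∀ J ∈ S.powerset, chainVal A lam (insert j (insert a J))
        = -(A a j : ℝ) * chainVal A lam (insert a J) := fun J hJ =>
      chainVal_insert_insert A lam (fun x hx => hS x (mem_powerset.1 hJ hx)) haj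
    rw [sum_powerset_insert ha, ih fun x hx => h x (mem_insert_of_mem hx),
      sum_congr rfl hchain, ← mul_sum, ← XiVal_insert_of_forall_lt A lam hS,
      sum_insert ha, hfilter_self, hsum_filter]
    ring

lemma XiVal_filter_le {I : Finset (Fin n)} {j : Fin n} (hj : j ∈ I) :
    XiVal A lam (I.filter (· ≤ j))
      = lam j - ∑ i ∈ I.filter (· < j), (A i j : ℝ) * XiVal A lam (I.filter (· ≤ i)) := by
  have hlt : ∀ x ∈ I.filter (· < j), x < j := fun x hx => (mem_filter.1 hx).2
  rw [filter_le_eq_insert_filter_lt hj, XiVal_insert_of_forall_lt A lam hlt,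
    sum_powerset_chainVal_insert A lam hlt]
  refine congrArg _ (sum_congr rfl fun i hi => ?_)
  rw [filter_filter]
  congr 3
  ext x
  exact and_iff_right_of_imp fun hxi => hxi.trans_lt (hlt i hi)

end

/-- **Coordinates of the point `p_I`: `⟨p_I, e_j⟩ = Ξ([j] ∩ I)` for `j ∈ I`.** -/
theorem pI_coords {n : ℕ} (A : Fin n → Fin n → ℤ)
    (hA : ∀ i j : Fin n, j ≤ i → A i j = 0) (lam : Fin n → ℝ)
    (I : Finset (Fin n)) (p : Fin n → ℝ)
    (hp0 : ∀ j ∉ I, p j = 0)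
    (hp1 : ∀ j ∈ I, p j + ∑ i, (A i j : ℝ) * p i = lam j) :
    ∀ j ∈ I, p j = XiVal A lam (I.filter (· ≤ j)) := by
  intro j
  induction j using WellFoundedLT.induction with
  | _ j ih =>
    intro hj
    have hrow : p j = lam j - ∑ i ∈ I.filter (· < j), (A i j : ℝ) * p i := by
      rw [← hp1 j hj, sum_subset (subset_univ (I.filter (· < j)))]
      · ring
      · intro i _ hi
        by_cases hiI : i ∈ I
        · rw [hA i j (not_lt.1 fun hij => hi (mem_filter.2 ⟨hiI, hij⟩)), Int.cast_zero, zero_mul]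
        · rw [hp0 i hiI, mul_zero]
    rw [hrow, XiVal_filter_le A lam hj]
    congr 1
    exact sum_congr rfl fun i hi => by rw [ih i (mem_filter.1 hi).2 (mem_filter.1 hi).1]
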